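/- Let R be a commutative noetherian ring, A a finite R-algebra, and I, J indecomposable injective left A-modules with associated primes p and q in Spec(R) respectively. If Hom_A(I, J) ≠ 0 then p ⊆ q. -/

import Mathlib

/-- A module is indecomposable if it is nonzero and is not the direct sum of two nonzero
submodules. -/
def Module.Indecomposable (A : Type*) [Ring A] (M : Type*) [AddCommGroup M]
    [Module A M] : Prop :=
  Nontrivial M ∧ ∀ N N' : Submodule A M, IsCompl N N' → N = ⊥ ∨ N' = ⊥

/-!
An indecomposable injective module `E` is uniform. If `N ⊓ N' = ⊥`, enlarge `N'` to a
submodule `K` maximal with `K ⊓ N = ⊥`, and `N` to a submodule `H` maximal with `H ⊓ K = ⊥`.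
Injectivity extends the inverse of `H ≅ (H + K) / K` to `g : E ⧸ K → E`; since the image of `N`
is essential in `E ⧸ K`, the image of `g` still meets `K` trivially, so it is `H`, and
`E → E ⧸ K → E` is an idempotent splitting `E` as `H ⊕ ker` with `N ≤ H` and `N' ≤ ker`.

In a uniform module, an `s ∈ R` that kills a nonzero element is locally nilpotent: `A ∙ x` is
a noetherian `R`-module, so for large `n` the kernel and image of `s ^ n` on it are disjoint;
then `s ^ n • (A ∙ x)` meets the nonzero kernel of `s ^ n` on `E` trivially, hence vanishes.

For the theorem, let `r ∈ p` and `f z ≠ 0`. Since `r` kills a nonzero element of `I`, some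
`r ^ n` kills `z`, hence kills `f z ≠ 0`; so `r ^ n` is locally nilpotent on `J`, in particular
some power of `r` kills the element of `J` whose annihilator is `q`, and `r ∈ q`.
-/

theorem exists_le_maximal_disjoint {α : Type*} [CompleteLattice α] [IsCompactlyGenerated α]
    {a b : α} (h : Disjoint a b) : ∃ m, a ≤ m ∧ Maximal (Disjoint · b) m :=
  zorn_le_nonempty₀ _ (fun c hc hchain _ _ =>
    ⟨sSup c, hchain.directedOn.disjoint_sSup_left.mpr hc, fun _ hz => le_sSup hz⟩) a h

def Module.IsUniform (A : Type*) [Ring A] (M : Type*) [AddCommGroup M] [Module A M] : Prop :=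
  ∀ N N' : Submodule A M, Disjoint N N' → N = ⊥ ∨ N' = ⊥

section Uniform

variable {A E : Type*} [Ring A] [AddCommGroup E] [Module A E]

theorem Submodule.eq_bot_of_disjoint_map_mkQ {N K : Submodule A E}
    (hK : Maximal (Disjoint · N) K) {L : Submodule A (E ⧸ K)} (hL : Disjoint L (N.map K.mkQ)) :
    L = ⊥ := by
  have hdisj : Disjoint (L.comap K.mkQ) N := by
    refine Submodule.disjoint_def.mpr fun x hxL hxN => Submodule.disjoint_def.mp hK.1 x ?_ hxN
    rw [← K.ker_mkQ, LinearMap.mem_ker]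
    exact Submodule.disjoint_def.mp hL _ hxL ⟨x, hxN, rfl⟩
  have hcomap : L.comap K.mkQ = K :=
    le_antisymm (hK.2 hdisj (K.le_comap_mkQ L)) (K.le_comap_mkQ L)
  rw [← Submodule.map_comap_eq_of_surjective K.mkQ_surjective L, hcomap, Submodule.mkQ_map_self]

theorem Module.Injective.exists_apply_mkQ_eq [Module.Injective A E] {H K : Submodule A E}
    (h : Disjoint H K) : ∃ g : E ⧸ K →ₗ[A] E, ∀ x ∈ H, g (K.mkQ x) = x := by
  have hinj : Function.Injective (K.mkQ ∘ₗ H.subtype) := by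
    rw [← LinearMap.ker_eq_bot, LinearMap.ker_comp, Submodule.ker_mkQ]
    exact Submodule.disjoint_iff_comap_eq_bot.mp h
  obtain ⟨g, hg⟩ := Module.Injective.out _ hinj H.subtype
  exact ⟨g, fun x hx => hg ⟨x, hx⟩⟩

theorem Module.Indecomposable.isUniform [Module.Injective A E]
    (hE : Module.Indecomposable A E) : Module.IsUniform A E := by
  intro N N' hNN'
  obtain ⟨K, hN'K, hK⟩ := exists_le_maximal_disjoint hNN'.symm
  obtain ⟨H, hNH, hH⟩ := exists_le_maximal_disjoint hK.1.symm
  obtain ⟨g, hg⟩ := Module.Injective.exists_apply_mkQ_eq hH.1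
  have hgK : K.comap g = ⊥ := by
    refine Submodule.eq_bot_of_disjoint_map_mkQ hK (Submodule.disjoint_def.mpr ?_)
    rintro - hK' ⟨x, hxN, rfl⟩
    rw [Submodule.mem_comap, hg x (hNH hxN)] at hK'
    rw [Submodule.disjoint_def.mp hK.1 x hK' hxN, map_zero]
  have hrange : LinearMap.range g ≤ H := by
    refine hH.2 (Submodule.disjoint_def.mpr ?_) fun x hx => ⟨K.mkQ x, hg x hx⟩
    rintro - ⟨v, rfl⟩ hvK
    have hv : v ∈ K.comap g := hvK
    rw [hgK, Submodule.mem_bot] at hv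
    rw [hv, map_zero]
  set e := g ∘ₗ K.mkQ
  have he : IsIdempotentElem e := LinearMap.ext fun x => hg _ (hrange ⟨_, rfl⟩)
  rcases hE.2 _ _ (LinearMap.IsIdempotentElem.isCompl he) with hbot | hbot
  · refine .inl (eq_bot_iff.mpr fun x hx => ?_)
    rw [← hbot, ← hg x (hNH hx)]
    exact LinearMap.mem_range_self e x
  · refine .inr (eq_bot_iff.mpr fun x hx => ?_)
    rw [← hbot, LinearMap.mem_ker, LinearMap.comp_apply, K.mkQ_apply,
      (Submodule.Quotient.mk_eq_zero K).mpr (hN'K hx), map_zero]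

end Uniform

section LocallyNilpotent

variable {R A E : Type*} [CommRing R] [IsNoetherianRing R] [Ring A] [Algebra R A]
  [Module.Finite R A] [AddCommGroup E] [Module A E] [Module R E] [IsScalarTower R A E]

open Filter in
theorem Module.IsUniform.exists_pow_smul_eq_zero (hE : Module.IsUniform A E) {s : R} {y : E}
    (hy : y ≠ 0) (hsy : s • y = 0) (x : E) : ∃ n : ℕ, s ^ n • x = 0 := by
  let W := A ∙ x
  have : Module.Finite R W := Module.Finite.trans A W
  have hpow : ∀ n (w : W), (algebraMap R (Module.End R W) s ^ n) w = s ^ n • w := by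
    intro n w
    rw [← map_pow, Module.algebraMap_end_apply]
  obtain ⟨n, hn, hn1⟩ :=
    ((algebraMap R (Module.End R W) s).eventually_disjoint_ker_pow_range_pow.and
      (eventually_ge_atTop 1)).exists
  let φ : E →ₗ[A] E := DistribSMul.toLinearMap A E (s ^ n)
  have hdisj : Disjoint (W.map φ) (LinearMap.ker φ) := by
    refine Submodule.disjoint_def.mpr ?_
    rintro - ⟨w, hw, rfl⟩ hker
    let f := algebraMap R (Module.End R W) s ^ n
    have hfw : f ⟨w, hw⟩ ∈ LinearMap.ker f := by
      ext
      simpa [f, φ, hpow] using hker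
    have := Submodule.disjoint_def.mp hn _ hfw (LinearMap.mem_range_self f _)
    simpa [f, φ, hpow] using congrArg Subtype.val this
  have hker : LinearMap.ker φ ≠ ⊥ := by
    refine (Submodule.ne_bot_iff _).mpr ⟨y, ?_, hy⟩
    rw [LinearMap.mem_ker, DistribSMul.toLinearMap_apply, ← Nat.sub_add_cancel hn1, pow_succ,
      mul_smul, hsy, smul_zero]
  have hx : φ x ∈ W.map φ := Submodule.mem_map_of_mem (Submodule.mem_span_singleton_self x)
  exact ⟨n, by rwa [(hE _ _ hdisj).resolve_right hker] at hx⟩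

theorem Module.IsUniform.mem_of_smul_eq_zero (hE : Module.IsUniform A E) {q : Ideal R}
    (hq : IsAssociatedPrime q E) {s : R} {y : E} (hy : y ≠ 0) (hsy : s • y = 0) : s ∈ q := by
  obtain ⟨hqp, x, rfl⟩ := isAssociatedPrime_iff.mp hq
  obtain ⟨n, hn⟩ := hE.exists_pow_smul_eq_zero hy hsy x
  exact hqp.mem_of_pow_mem n (Submodule.mem_colon_singleton.mpr (by rw [hn]; exact zero_mem _))

end LocallyNilpotent

/-- Let `R` be a commutative noetherian ring, `A` a finite `R`-algebra, and `I`, `J`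
indecomposable injective left `A`-modules with associated primes `p` and `q` in
`Spec R` respectively.  If `Hom_A(I, J) ≠ 0` then `p ⊆ q`. -/
theorem assoc_prime_le_of_hom_ne_zero
    {R A : Type*} [CommRing R] [IsNoetherianRing R] [Ring A] [Algebra R A]
    [Module.Finite R A]
    (I : Type*) [AddCommGroup I] [Module A I] [Module R I]
    [IsScalarTower R A I] [Module.Injective A I]
    (J : Type*) [AddCommGroup J] [Module A J] [Module R J]
    [IsScalarTower R A J] [Module.Injective A J]
    (hindI : Module.Indecomposable A I) (hindJ : Module.Indecomposable A J)
    (p q : Ideal R) (hp : IsAssociatedPrime p I) (hq : IsAssociatedPrime q J)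
    (f : I →ₗ[A] J) (hf : f ≠ 0) :
    p ≤ q := by
  intro r hr
  obtain ⟨hpp, x, rfl⟩ := isAssociatedPrime_iff.mp hp
  have hx : x ≠ 0 := by
    rintro rfl
    exact hpp.ne_top (by simp)
  obtain ⟨z, hz⟩ : ∃ z, f z ≠ 0 := by simpa [LinearMap.ext_iff] using hf
  obtain ⟨n, hn⟩ := hindI.isUniform.exists_pow_smul_eq_zero hx
    ((Submodule.mem_bot R).mp (Submodule.mem_colon_singleton.mp hr)) z
  refine hq.isPrime.mem_of_pow_mem n (hindJ.isUniform.mem_of_smul_eq_zero hq hz ?_)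
  rw [← f.map_smul_of_tower, hn, map_zero]
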